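/- Let M be a compact metric space with a finite good covering 𝒰 = {U_1,…,U_N}, and fix L > 6. Let Ψ : |𝒩_𝒰| → M(p) be defined by Ψ(θ) = (θ, v_M), where v_M is the vertex of the cone K(M). Then Ψ is an isometric embedding and Ψ(|𝒩_𝒰|) is a Lipschitz strong deformation retract of M(p). -/
import Mathlib


open Metric Set

/-- The cone distance on `M × [0,L]` (representatives of the cone
`K(M) = M × [0,L] / (M × {L})`). Two representatives are identified in the cone iff their
cone distance is `0`. -/
noncomputable def coneDist {M : Type*} [PseudoMetricSpace M] (L : ℝ) (c c' : M × ℝ) : ℝ :=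
  Real.sqrt ((L - c.2) ^ 2 + (L - c'.2) ^ 2 -
    2 * (L - c.2) * (L - c'.2) * Real.cos (min Real.pi (dist c.1 c'.1)))

/-- The distance of the mapping cylinder `M(p) ⊆ |𝒩_𝒰| × K(M)`:
`d((θ,c),(θ',c'))² = d(θ,θ')² + d_K(c,c')²`, on representatives `(θ, x, t)`. -/
noncomputable def cylDist {M : Type*} [PseudoMetricSpace M] {N : ℕ} (L : ℝ)
    (z w : (Fin N → ℝ) × M × ℝ) : ℝ :=
  Real.sqrt (dist z.1 w.1 ^ 2 + coneDist L z.2 w.2 ^ 2)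

/-- A subset `V` of a metric space admits a *Lipschitz strong deformation retraction to a
point*. -/
def IsLipSDRToPoint {X : Type*} [MetricSpace X] (V : Set X) : Prop :=
  ∃ (p : V) (F : V × unitInterval → V) (K : NNReal),
    LipschitzWith K F ∧ (∀ x, F (x, 0) = x) ∧ (∀ x, F (x, 1) = p) ∧ (∀ t, F (p, t) = p)

/-- A locally finite open covering is *good*. -/
def IsGoodCovering {X : Type*} [MetricSpace X] {J : Type*} (U : J → Set X) : Prop :=
  (∀ j, IsOpen (U j)) ∧ (⋃ j, U j) = univ ∧ LocallyFinite U ∧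
    (∀ j, IsCompact (closure (U j))) ∧
    ∀ s : Finset J, s.Nonempty → (⋂ j ∈ s, U j).Nonempty → IsLipSDRToPoint (⋂ j ∈ s, U j)

/-- The geometric realization of the nerve of a finite covering, with the sup metric. -/
def NerveSet {M : Type*} [MetricSpace M] {N : ℕ} (U : Fin N → Set M) : Set (Fin N → ℝ) :=
  {θ | (∀ j, θ j ∈ Icc (0:ℝ) 1) ∧ ∑ j, θ j = 1 ∧ (⋂ j ∈ {j | θ j ≠ 0}, U j).Nonempty}

/-- `(θ, x, t)` represents a point of the mapping cylinder
`M(p) = ⋃_σ σ × K(U_σ) ⊆ |𝒩_𝒰| × K(M)`: `θ` lies in the nerve, `t ∈ [0,L]`, and there is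
a simplex `s` of the nerve containing the support of `θ` such that either `t = L` (the
vertex of the cone) or `x ∈ U_s`. -/
def InCyl {M : Type*} [MetricSpace M] {N : ℕ} (U : Fin N → Set M) (L : ℝ)
    (z : (Fin N → ℝ) × M × ℝ) : Prop :=
  z.1 ∈ NerveSet U ∧ z.2.2 ∈ Icc 0 L ∧
    ∃ s : Finset (Fin N), (∀ j, z.1 j ≠ 0 → j ∈ s) ∧ (⋂ j ∈ s, U j).Nonempty ∧
      (z.2.2 = L ∨ z.2.1 ∈ ⋂ j ∈ s, U j)

lemma keyE {L A B co s t : ℝ} (hA : 0 ≤ A) (hA' : A ≤ L) (hB : 0 ≤ B) (hB' : B ≤ L)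
    (hs : 0 ≤ s) (hs' : s ≤ 1) (ht : 0 ≤ t) (ht' : t ≤ 1) (hco : co ≤ 1) :
    ((1-s)*A)^2 + ((1-t)*B)^2 - 2*((1-s)*A)*((1-t)*B)*co
      ≤ 2*(A^2 + B^2 - 2*A*B*co) + 2*L^2*(s-t)^2 := by
  have hab : 0 ≤ A*B*(1-co) := mul_nonneg (mul_nonneg hA hB) (by linarith)
  have hB2 : B^2 ≤ L^2 := by nlinarith
  have hu : ((1-s)*(A-B))^2 ≤ (A-B)^2 := by
    nlinarith [mul_nonneg (mul_nonneg hs (show (0:ℝ) ≤ 2-s by linarith)) (sq_nonneg (A-B))]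
  have hv : ((t-s)*B)^2 ≤ (s-t)^2*L^2 := by
    nlinarith [mul_le_mul_of_nonneg_left hB2 (sq_nonneg (t-s))]
  have h1 : ((1-s)*A-(1-t)*B)^2 ≤ 2*(A-B)^2 + 2*L^2*(s-t)^2 := by
    nlinarith [sq_nonneg ((1-s)*(A-B) - (t-s)*B), hu, hv]
  have hx : (1-s)*(1-t) ≤ 1 := by nlinarith
  have h2 : 2*((1-s)*(1-t))*(A*B*(1-co)) ≤ 4*(A*B*(1-co)) := by
    nlinarith [mul_le_mul_of_nonneg_right hx hab]
  nlinarith [h1, h2]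

lemma Enonneg {A B co : ℝ} (hA : 0 ≤ A) (hB : 0 ≤ B) (hco : co ≤ 1) :
    0 ≤ A^2 + B^2 - 2*A*B*co := by
  nlinarith [sq_nonneg (A-B), mul_nonneg (mul_nonneg hA hB) (sub_nonneg.2 hco)]

lemma coneDist_self {M : Type*} [PseudoMetricSpace M] (L : ℝ) (c : M × ℝ) :
    coneDist L c c = 0 := by
  unfold coneDist
  rw [dist_self, min_eq_right Real.pi_nonneg, Real.cos_zero]
  have h : (L - c.2)^2 + (L - c.2)^2 - 2*(L-c.2)*(L-c.2)*1 = 0 := by ring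
  rw [h, Real.sqrt_zero]

lemma cylDist_self {M : Type*} [PseudoMetricSpace M] {N : ℕ} (L : ℝ)
    (z : (Fin N → ℝ) × M × ℝ) : cylDist L z z = 0 := by
  simp [cylDist, coneDist_self, dist_self]

set_option maxHeartbeats 1000000 in
lemma sqrt_bound {L a b s t dθ D : ℝ} (hL : 0 < L)
    (ha0 : 0 ≤ a) (haL : a ≤ L) (hb0 : 0 ≤ b) (hbL : b ≤ L)
    (hs0 : 0 ≤ s) (hs1 : s ≤ 1) (ht0 : 0 ≤ t) (ht1 : t ≤ 1) (hco : D ≤ 1) :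
    Real.sqrt (dθ^2 + Real.sqrt ((L - (a+s*(L-a)))^2 + (L-(b+t*(L-b)))^2
        - 2*(L-(a+s*(L-a)))*(L-(b+t*(L-b)))*D)^2)
      ≤ 2*(L+1) * max (Real.sqrt (dθ^2
          + Real.sqrt ((L-a)^2+(L-b)^2-2*(L-a)*(L-b)*D)^2)) |s-t| := by
  rw [show L - (a+s*(L-a)) = (1-s)*(L-a) from by ring,
      show L - (b+t*(L-b)) = (1-t)*(L-b) from by ring]
  have hE0 : 0 ≤ (L-a)^2 + (L-b)^2 - 2*(L-a)*(L-b)*D :=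
    Enonneg (by linarith) (by linarith) hco
  have hEF : 0 ≤ ((1-s)*(L-a))^2 + ((1-t)*(L-b))^2 - 2*((1-s)*(L-a))*((1-t)*(L-b))*D :=
    Enonneg (mul_nonneg (by linarith) (by linarith))
      (mul_nonneg (by linarith) (by linarith)) hco
  rw [Real.sq_sqrt hEF, Real.sq_sqrt hE0]
  set E0 := (L-a)^2 + (L-b)^2 - 2*(L-a)*(L-b)*D with hE0d
  set EF := ((1-s)*(L-a))^2 + ((1-t)*(L-b))^2 - 2*((1-s)*(L-a))*((1-t)*(L-b))*D with hEFd
  set m := max (Real.sqrt (dθ^2 + E0)) |s - t| with hm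
  have hm0 : 0 ≤ m := le_trans (abs_nonneg _) (le_max_right _ _)
  have hm1 : Real.sqrt (dθ^2 + E0) ≤ m := le_max_left _ _
  have hm2 : |s - t| ≤ m := le_max_right _ _
  have hD0 : dθ^2 + E0 ≤ m^2 := by
    have h := Real.sq_sqrt (add_nonneg (sq_nonneg dθ) hE0)
    nlinarith [Real.sqrt_nonneg (dθ^2 + E0), hm1]
  have hst : (s - t)^2 ≤ m^2 := by
    nlinarith [abs_nonneg (s-t), sq_abs (s-t), hm2]
  have key := keyE (L := L) (A := L-a) (B := L-b) (co := D) (s := s) (t := t)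
    (by linarith) (by linarith) (by linarith) (by linarith) hs0 hs1 ht0 ht1 hco
  have s1 : dθ^2 + EF ≤ 2*(dθ^2 + E0) + 2*L^2*(s-t)^2 := by
    rw [hE0d, hEFd]; nlinarith [key, sq_nonneg dθ]
  have s3 : 2*L^2*(s-t)^2 ≤ 2*L^2*m^2 :=
    mul_le_mul_of_nonneg_left hst (by positivity)
  have s4 : 2*m^2 + 2*L^2*m^2 ≤ (2*(L+1)*m)^2 := by
    nlinarith [mul_nonneg hm0 hm0, mul_nonneg hL.le (mul_nonneg hm0 hm0),
      mul_nonneg (mul_nonneg hL.le hL.le) (mul_nonneg hm0 hm0)]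
  have hfin : dθ^2 + EF ≤ (2*(L+1)*m)^2 := by linarith
  calc Real.sqrt (dθ^2 + EF) ≤ Real.sqrt ((2*(L+1)*m)^2) := Real.sqrt_le_sqrt hfin
    _ = 2*(L+1)*m := Real.sqrt_sq (by nlinarith)

set_option maxHeartbeats 1000000 in
lemma cyl_bound {M : Type*} [PseudoMetricSpace M] {N : ℕ} {L : ℝ} (hL : 0 < L)
    (z w : (Fin N → ℝ) × M × ℝ) (s t : ℝ)
    (ha : z.2.2 ∈ Icc 0 L) (hb : w.2.2 ∈ Icc 0 L)
    (hs : s ∈ Icc (0:ℝ) 1) (ht : t ∈ Icc (0:ℝ) 1) :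
    cylDist L (z.1, z.2.1, z.2.2 + s*(L - z.2.2)) (w.1, w.2.1, w.2.2 + t*(L - w.2.2))
      ≤ (2*(L+1)) * max (cylDist L z w) |s - t| := by
  obtain ⟨θ, x, a⟩ := z
  obtain ⟨θ', x', b⟩ := w
  obtain ⟨ha0, haL⟩ := ha
  obtain ⟨hb0, hbL⟩ := hb
  obtain ⟨hs0, hs1⟩ := hs
  obtain ⟨ht0, ht1⟩ := ht
  exact sqrt_bound hL ha0 haL hb0 hbL hs0 hs1 ht0 ht1 (Real.cos_le_one _)

/-- For a compact metric space with a finite good covering and `L > 6`,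
the map `Ψ : |𝒩_𝒰| → M(p)`, `Ψ(θ) = (θ, v_M)` (the vertex of `K(M)`, i.e. `t = L`), is an
isometric embedding and its image is a Lipschitz strong deformation retract of `M(p)`.
Everything is expressed on representatives, with equality in `M(p)` expressed as vanishing
of `cylDist`. -/
theorem nerve_isometric_lipSDR_of_cylinder {M : Type*} [MetricSpace M] [CompactSpace M]
    {N : ℕ} (U : Fin N → Set M) (hU : IsGoodCovering U) (L : ℝ) (hL : 6 < L) :
    ∃ Ψ : ↥(NerveSet U) → (Fin N → ℝ) × M × ℝ,
      (∀ θ : ↥(NerveSet U),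
        InCyl U L (Ψ θ) ∧ (Ψ θ).1 = (θ : Fin N → ℝ) ∧ (Ψ θ).2.2 = L) ∧
      (∀ θ θ' : ↥(NerveSet U), cylDist L (Ψ θ) (Ψ θ') = dist θ θ') ∧
      ∃ (F : ((Fin N → ℝ) × M × ℝ) × unitInterval → (Fin N → ℝ) × M × ℝ) (K : NNReal),
        (∀ z, InCyl U L z → ∀ t : unitInterval, InCyl U L (F (z, t))) ∧
        (∀ z w, InCyl U L z → InCyl U L w → ∀ s t : unitInterval,
          cylDist L (F (z, s)) (F (w, t)) ≤ K * max (cylDist L z w) (dist s t)) ∧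
        (∀ z, InCyl U L z → cylDist L (F (z, 0)) z = 0) ∧
        (∀ z, InCyl U L z → (F (z, 1)).2.2 = L) ∧
        (∀ z, InCyl U L z → z.2.2 = L →
          ∀ t : unitInterval, cylDist L (F (z, t)) z = 0) := by
  classical
  have hL0 : (0:ℝ) < L := by linarith
  refine ⟨fun θ => ((θ : Fin N → ℝ), θ.2.2.2.some, L), ?_, ?_, ?_⟩
  · intro θ
    refine ⟨⟨θ.2, ⟨by linarith, le_refl L⟩,
      Finset.univ.filter (fun j => (θ : Fin N → ℝ) j ≠ 0), ?_, ?_, Or.inl rfl⟩, rfl, rfl⟩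
    · intro j hj; simp [hj]
    · have h : ⋂ j ∈ Finset.univ.filter (fun j => (θ : Fin N → ℝ) j ≠ 0), U j
          = ⋂ j ∈ {j | (θ : Fin N → ℝ) j ≠ 0}, U j := by
        ext x; simp
      rw [h]; exact θ.2.2.2
  · intro θ θ'
    have hc : coneDist L ((θ.2.2.2.some : M), L) ((θ'.2.2.2.some : M), L) = 0 := by
      unfold coneDist; simp
    simp only [cylDist, hc]
    rw [Subtype.dist_eq]
    simp [Real.sqrt_sq dist_nonneg]
  · refine ⟨fun p => (p.1.1, p.1.2.1, p.1.2.2 + (p.2 : ℝ) * (L - p.1.2.2)),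
      Real.toNNReal (2*(L+1)), ?_, ?_, ?_, ?_, ?_⟩
    · intro z hz t
      obtain ⟨hz1, ⟨hz20, hz2L⟩, s, hsupp, hsne, hor⟩ := hz
      refine ⟨hz1, ⟨?_, ?_⟩, s, hsupp, hsne, ?_⟩
      · show 0 ≤ z.2.2 + (t : ℝ) * (L - z.2.2)
        nlinarith [t.2.1, mul_nonneg t.2.1 (sub_nonneg.2 hz2L)]
      · show z.2.2 + (t : ℝ) * (L - z.2.2) ≤ L
        nlinarith [t.2.2, mul_le_of_le_one_left (sub_nonneg.2 hz2L) t.2.2]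
      · rcases hor with h | h
        · left; show z.2.2 + (t : ℝ) * (L - z.2.2) = L; rw [h]; ring
        · right; exact h
    · intro z w hz hw s t
      have hb := cyl_bound (N := N) hL0 z w (s : ℝ) (t : ℝ) hz.2.1 hw.2.1 s.2 t.2
      have hd : dist s t = |(s:ℝ) - (t:ℝ)| := by rw [Subtype.dist_eq, Real.dist_eq]
      have hK : ((Real.toNNReal (2*(L+1)) : NNReal) : ℝ) = 2*(L+1) :=
        Real.coe_toNNReal _ (by linarith)
      show cylDist L (z.1, z.2.1, z.2.2 + (s:ℝ)*(L - z.2.2))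
            (w.1, w.2.1, w.2.2 + (t:ℝ)*(L - w.2.2))
          ≤ _ * max (cylDist L z w) (dist s t)
      rw [hd, hK]
      exact hb
    · intro z hz
      have h : z.2.2 + ((0 : unitInterval) : ℝ) * (L - z.2.2) = z.2.2 := by norm_num
      show cylDist L (z.1, z.2.1, z.2.2 + ((0 : unitInterval) : ℝ) * (L - z.2.2)) z = 0
      rw [h]
      exact cylDist_self L z
    · intro z hz
      show z.2.2 + ((1 : unitInterval) : ℝ) * (L - z.2.2) = L
      norm_num
    · intro z hz hzL t
      have h : z.2.2 + (t : ℝ) * (L - z.2.2) = z.2.2 := by rw [hzL]; ring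
      show cylDist L (z.1, z.2.1, z.2.2 + (t : ℝ) * (L - z.2.2)) z = 0
      rw [h]
      exact cylDist_self L z
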